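/- arXiv:1908.05921 — 2 statements merged into one kernel-verified Lean document; each statement's English description precedes it below -/
import Mathlib

section
/- For a left R-module M, the following are equivalent: (1) M has only finitely many submodules; (2) the maximum vertex degree of the sum-essential graph S(M) is finite; (3) every vertex of S(M) has finite degree. -/
variable {R : Type*} [Ring R] {M : Type*} [AddCommGroup M] [Module R M]

/-- `N` is an essential submodule of `M`: it intersects every nonzero submodule nontrivially. -/
def IsEssentialSubmodule (N : Submodule R M) : Prop :=
  ∀ B : Submodule R M, B ≠ ⊥ → N ⊓ B ≠ ⊥

/-- A vertex of the sum-essential graph `S(M)`: a nontrivial submodule. -/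
def IsVertexS (N : Submodule R M) : Prop := N ≠ ⊥ ∧ N ≠ ⊤

/-- Adjacency in the sum-essential graph `S(M)`. -/
def AdjS (A B : Submodule R M) : Prop :=
  IsVertexS A ∧ IsVertexS B ∧ A ≠ B ∧ IsEssentialSubmodule (A ⊔ B)

/-- A vertex of the proper sum-essential graph `N(M)`: a nontrivial non-essential submodule. -/
def IsVertexP (N : Submodule R M) : Prop :=
  N ≠ ⊥ ∧ N ≠ ⊤ ∧ ¬ IsEssentialSubmodule N

/-- Adjacency in the proper sum-essential graph `N(M)`. -/
def AdjP (A B : Submodule R M) : Prop :=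
  IsVertexP A ∧ IsVertexP B ∧ A ≠ B ∧ IsEssentialSubmodule (A ⊔ B)

/-- `U` is a uniform submodule: nonzero, and any two nonzero submodules of it intersect. -/
def UniformSubmodule (U : Submodule R M) : Prop :=
  U ≠ ⊥ ∧ ∀ A B : Submodule R M, A ≤ U → B ≤ U → A ≠ ⊥ → B ≠ ⊥ → A ⊓ B ≠ ⊥

/-- `C` is a complement of `U` in `M`: maximal with respect to `U ⊓ C = ⊥`. -/
def IsComplementOf (C U : Submodule R M) : Prop :=
  U ⊓ C = ⊥ ∧ ∀ D : Submodule R M, U ⊓ D = ⊥ → C ≤ D → D = C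

/-!
If some vertex `E` is essential, then so is `E + X` for every `X`: `E` is adjacent to every other
vertex, and its finite degree bounds the number of submodules. Otherwise `M` is the only essential
submodule, and since `A + C` is essential whenever `C` is maximal with `A ∩ C = 0`, the lattice of
submodules is complemented. There every `B ≠ A, M` with `A + B = M` is a neighbour of `A`. Fixing a
vertex `A` with complement `C`, each `D` is sent by `D ↦ A + D` to such a partner of `C`, and on a
fibre `{D | A + D = Q}` the map `D ↦ D + Q'` (`Q'` a complement of `Q`) is injective with values
among the partners of `A`.
-/

variable {α : Type*}

theorem exists_maximal_disjoint [CompleteLattice α] [IsCompactlyGenerated α] (a : α) :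
    ∃ c, Maximal (Disjoint a) c :=
  zorn_le₀ _ fun s hs hchain =>
    ⟨sSup s, hchain.directedOn.disjoint_sSup_right.2 hs, fun _ => le_sSup⟩

theorem Maximal.eq_bot_of_disjoint_sup [Lattice α] [OrderBot α] [IsModularLattice α]
    {a b c : α} (hc : Maximal (Disjoint a) c) (hb : Disjoint (a ⊔ c) b) : b = ⊥ := by
  have hcb : c ⊔ b ≤ c := hc.2 (hc.1.disjoint_sup_right_of_disjoint_sup_left hb) le_sup_left
  exact hb.eq_bot_of_ge ((le_sup_right.trans hcb).trans le_sup_right)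

section ComplementedModular

variable [Lattice α] [BoundedOrder α] [IsModularLattice α] [ComplementedLattice α]

theorem Set.Finite.setOf_sup_eq {a : α} (h : {b | Codisjoint a b}.Finite) (q : α) :
    {d | a ⊔ d = q}.Finite := by
  obtain ⟨q', hq⟩ := exists_isCompl q
  -- modularity recovers a `d ≤ q` from `d ⊔ q'`
  have hrecover : ∀ d ≤ q, (d ⊔ q') ⊓ q = d := fun d hd => by
    rw [sup_inf_assoc_of_le _ hd, hq.symm.inf_eq_bot, sup_bot_eq]
  have hinj : Set.InjOn (· ⊔ q') {d | a ⊔ d = q} :=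
    fun d₁ hd₁ d₂ hd₂ (heq : d₁ ⊔ q' = d₂ ⊔ q') => by
      rw [← hrecover d₁ (hd₁ ▸ le_sup_right), heq, hrecover d₂ (hd₂ ▸ le_sup_right)]
  refine Set.Finite.of_finite_image (h.subset ?_) hinj
  rintro _ ⟨d, hd, rfl⟩
  exact codisjoint_iff.2 (by rw [← sup_assoc, hd, hq.sup_eq_top])

theorem finite_of_finite_setOf_codisjoint {a : α} (ha₀ : a ≠ ⊥) (ha₁ : a ≠ ⊤)
    (h : ∀ b : α, b ≠ ⊥ → b ≠ ⊤ → {c | Codisjoint b c}.Finite) : Finite α := by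
  obtain ⟨c, hac⟩ := exists_isCompl a
  have hc₀ : c ≠ ⊥ := fun hc => ha₁ (by simpa [hc] using hac.sup_eq_top)
  have hc₁ : c ≠ ⊤ := fun hc => ha₀ (by simpa [hc] using hac.inf_eq_bot)
  rw [← Set.finite_univ_iff]
  refine ((h c hc₀ hc₁).biUnion fun q _ => (h a ha₀ ha₁).setOf_sup_eq q).subset fun d _ => ?_
  exact Set.mem_biUnion (x := a ⊔ d) (hac.codisjoint.symm.mono_right le_sup_left) rfl

end ComplementedModular

theorem isEssentialSubmodule_iff {N : Submodule R M} :
    IsEssentialSubmodule N ↔ ∀ B, Disjoint N B → B = ⊥ := by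
  refine forall_congr' fun B => ?_
  rw [disjoint_iff]
  exact not_imp_not

theorem IsEssentialSubmodule.mono {N N' : Submodule R M} (hN : IsEssentialSubmodule N)
    (h : N ≤ N') : IsEssentialSubmodule N' :=
  isEssentialSubmodule_iff.2 fun B hB => isEssentialSubmodule_iff.1 hN B (hB.mono_left h)

theorem isEssentialSubmodule_top : IsEssentialSubmodule (⊤ : Submodule R M) :=
  isEssentialSubmodule_iff.2 fun _ => top_disjoint.1

theorem finite_of_isEssentialSubmodule_of_finite_adjS {E : Submodule R M} (hE : IsVertexS E)
    (hEss : IsEssentialSubmodule E) (hfin : {C | AdjS E C}.Finite) : Finite (Submodule R M) := by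
  rw [← Set.finite_univ_iff]
  refine ((hfin.insert E).insert ⊤ |>.insert ⊥).subset fun X _ => ?_
  by_cases hX : X = ⊥ ∨ X = ⊤ ∨ X = E
  · simp only [Set.mem_insert_iff]
    tauto
  push Not at hX
  obtain ⟨hX₀, hX₁, hXE⟩ := hX
  exact .inr <| .inr <| .inr ⟨hE, ⟨hX₀, hX₁⟩, hXE.symm, hEss.mono le_sup_left⟩

theorem Set.Finite.setOf_codisjoint_of_adjS {A : Submodule R M} (hA : IsVertexS A)
    (hfin : {C | AdjS A C}.Finite) : {B | Codisjoint A B}.Finite := by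
  refine ((hfin.insert A).insert ⊤).subset fun B (hB : Codisjoint A B) => ?_
  by_cases hB' : B = ⊤ ∨ B = A
  · simp only [Set.mem_insert_iff]
    tauto
  push Not at hB'
  have hB₀ : B ≠ ⊥ := fun h => hA.2 (by simpa [h] using hB.eq_top)
  exact .inr <| .inr ⟨hA, ⟨hB₀, hB'.1⟩, hB'.2.symm, hB.eq_top ▸ isEssentialSubmodule_top⟩

theorem complementedLattice_of_isEssentialSubmodule_eq_top
    (h : ∀ N : Submodule R M, IsEssentialSubmodule N → N = ⊤) :
    ComplementedLattice (Submodule R M) where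
  exists_isCompl A := by
    obtain ⟨C, hC⟩ := exists_maximal_disjoint A
    refine ⟨C, hC.1, codisjoint_iff.2 (h _ ?_)⟩
    exact isEssentialSubmodule_iff.2 fun B hB => hC.eq_bot_of_disjoint_sup hB

theorem finite_of_forall_finite_adjS {A : Submodule R M} (hA : IsVertexS A)
    (h : ∀ A : Submodule R M, IsVertexS A → {C | AdjS A C}.Finite) :
    Finite (Submodule R M) := by
  by_cases hE : ∃ E : Submodule R M, IsVertexS E ∧ IsEssentialSubmodule E
  · obtain ⟨E, hE, hEss⟩ := hE
    exact finite_of_isEssentialSubmodule_of_finite_adjS hE hEss (h E hE)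
  push Not at hE
  have hEss : ∀ N : Submodule R M, IsEssentialSubmodule N → N = ⊤ := fun N hN => by
    by_contra hN₁
    refine hE N ⟨fun hN₀ => hA.1 ?_, hN₁⟩ hN
    exact isEssentialSubmodule_iff.1 hN A (hN₀ ▸ disjoint_bot_left)
  have := complementedLattice_of_isEssentialSubmodule_eq_top hEss
  exact finite_of_finite_setOf_codisjoint hA.1 hA.2 fun B hB₀ hB₁ =>
    (h B ⟨hB₀, hB₁⟩).setOf_codisjoint_of_adjS ⟨hB₀, hB₁⟩

/-- TFAE: (1) `M` has finitely many submodules; (2) the maximum degree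
of `S(M)` is finite; (3) every vertex of `S(M)` has finite degree. -/
theorem stmt4 (h2 : ∃ A B : Submodule R M, IsVertexS A ∧ IsVertexS B ∧ A ≠ B) :
    List.TFAE
      [Finite (Submodule R M),
       ∃ n : ℕ, ∀ A : Submodule R M, IsVertexS A →
         {C | AdjS A C}.Finite ∧ {C | AdjS A C}.ncard ≤ n,
       ∀ A : Submodule R M, IsVertexS A → {C | AdjS A C}.Finite] := by
  tfae_have 1 → 2 := fun _ =>
    ⟨Nat.card (Submodule R M), fun A _ => ⟨Set.toFinite _, Set.ncard_le_card _⟩⟩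
  tfae_have 2 → 3 := fun ⟨_, hn⟩ A hA => (hn A hA).1
  tfae_have 3 → 1 := fun h =>
    let ⟨_, _, hA, _⟩ := h2
    finite_of_forall_finite_adjS hA h
  tfae_finish
end

section
/- Let M be a semisimple left R-module and B a nontrivial submodule. Then B has degree 1 in the sum-essential graph S(M) if and only if B is simple, M is not simple, and M contains no submodule isomorphic to B other than B itself. -/
variable {R : Type*} [Ring R] {M : Type*} [AddCommGroup M] [Module R M]

/-!
In a semisimple module `A + B` is essential only when it is all of `M`, so the neighbours of `B`
in `S(M)` are the proper submodules `C` with `B + C = M`. A complement `E` of `B` is one; if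
`0 ≠ A < B`, then `A + E` is another, so degree one forces `B` to be simple, and then the
neighbours of `B` are exactly its complements. A simple `B` has a second complement iff it has a
second copy: a complement `D ≠ C` contains a simple `A ⊄ C`, which the projection onto `B`
along `C` maps isomorphically onto `B`. Conversely, if `B` has a unique complement `C`, then
every `X` disjoint from `B` lies in `C` (`X` plus a complement of `B + X` complements `B`);
but a copy `B' ≅ B` and the graph of the isomorphism are both disjoint from `B` while their
sum contains `B`.
-/

section Lattice

variable {α : Type*} [Lattice α] [BoundedOrder α]

theorem IsAtom.codisjoint_and_ne_top_iff_isCompl {b c : α} (hb : IsAtom b) :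
    Codisjoint b c ∧ c ≠ ⊤ ↔ IsCompl b c := by
  refine ⟨fun ⟨hbc, hc⟩ => ⟨?_, hbc⟩, fun h => ⟨h.codisjoint, ?_⟩⟩
  · rcases hb.le_iff.mp (inf_le_left : b ⊓ c ≤ b) with h | h
    · exact disjoint_iff.mpr h
    · exact absurd ((sup_of_le_right (inf_eq_left.mp h)).symm.trans hbc.eq_top) hc
  · rintro rfl
    exact hb.1 (disjoint_top.mp h.disjoint)

variable [IsModularLattice α] [ComplementedLattice α]

theorem isAtom_of_existsUnique_codisjoint_ne_top {b : α} (hb : b ≠ ⊥)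
    (h : ∃! c, Codisjoint b c ∧ c ≠ ⊤) : IsAtom b := by
  refine ⟨hb, fun a hab => by_contra fun ha => ?_⟩
  obtain ⟨e, he⟩ := exists_isCompl b
  have hinf : (a ⊔ e) ⊓ b = a := by
    rw [sup_inf_assoc_of_le e hab.le, inf_comm, he.inf_eq_bot, sup_bot_eq]
  have he_top : e ≠ ⊤ := by
    rintro rfl
    exact hb (disjoint_top.mp he.disjoint)
  have hae_top : a ⊔ e ≠ ⊤ := by
    intro h
    rw [h, top_inf_eq] at hinf
    exact hab.ne hinf.symm
  have hae : a ⊔ e = e :=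
    h.unique ⟨he.codisjoint.mono_right le_sup_right, hae_top⟩ ⟨he.codisjoint, he_top⟩
  exact ha ((he.disjoint.mono_left hab.le).eq_bot_of_le (sup_eq_right.mp hae))

theorem existsUnique_codisjoint_ne_top_iff {b : α} (hb : b ≠ ⊥) :
    (∃! c, Codisjoint b c ∧ c ≠ ⊤) ↔ IsAtom b ∧ ∃! c, IsCompl b c := by
  refine ⟨fun h => ?_, fun ⟨hatom, h⟩ => ?_⟩
  · have hatom := isAtom_of_existsUnique_codisjoint_ne_top hb h
    exact ⟨hatom, (existsUnique_congr fun _ => hatom.codisjoint_and_ne_top_iff_isCompl).mp h⟩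
  · exact (existsUnique_congr fun _ => hatom.codisjoint_and_ne_top_iff_isCompl).mpr h

theorem le_of_disjoint_of_forall_isCompl_eq {b c x : α} (huniq : ∀ d, IsCompl b d → d = c)
    (hx : Disjoint b x) : x ≤ c := by
  obtain ⟨e, he⟩ := exists_isCompl (b ⊔ x)
  rw [← huniq _ (hx.isCompl_sup_right_of_isCompl_sup_left he)]
  exact le_sup_left

end Lattice

namespace Submodule

theorem exists_disjoint_le_sup_of_linearEquiv {B B' : Submodule R M} (hdisj : Disjoint B B')
    (φ : B' ≃ₗ[R] B) : ∃ G : Submodule R M, Disjoint B G ∧ B ≤ B' ⊔ G := by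
  refine ⟨LinearMap.range (B'.subtype + B.subtype ∘ₗ φ.toLinearMap), ?_, fun b hb => ?_⟩
  · rw [disjoint_def]
    rintro _ hxB ⟨x, rfl⟩
    have hx : (x : M) ∈ B := by simpa using sub_mem hxB (φ x).2
    have hx0 : x = 0 := Subtype.ext (disjoint_def.mp hdisj _ hx x.2)
    simp [hx0]
  · obtain ⟨x, hx⟩ := φ.surjective ⟨b, hb⟩
    refine mem_sup.mpr ⟨-x, neg_mem x.2, _, ⟨x, rfl⟩, ?_⟩
    simp [hx]

variable [IsSemisimpleModule R M]

theorem exists_ne_linearEquiv_of_not_le_isCompl {B C D : Submodule R M} (hB : IsAtom B)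
    (hC : IsCompl B C) (hBD : Disjoint B D) (hDC : ¬ D ≤ C) :
    ∃ A ≠ B, Nonempty (A ≃ₗ[R] B) := by
  obtain ⟨A, hA, hAD, hAC⟩ : ∃ A, IsAtom A ∧ A ≤ D ∧ ¬ A ≤ C := by
    simpa [le_iff_atom_le_imp (a := D)] using hDC
  have := isSimpleModule_iff_isAtom.mpr hA
  have := isSimpleModule_iff_isAtom.mpr hB
  let f : A →ₗ[R] B := B.projectionOnto C hC ∘ₗ A.subtype
  have hf : f ≠ 0 := by
    intro hf
    refine hAC fun x hx => (projectionOnto_apply_eq_zero_iff hC).mp ?_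
    exact LinearMap.congr_fun hf ⟨x, hx⟩
  refine ⟨A, ?_, ⟨LinearEquiv.ofBijective f (LinearMap.bijective_of_ne_zero hf)⟩⟩
  rintro rfl
  exact hA.1 (hBD.eq_bot_of_le hAD)

theorem existsUnique_isCompl_iff_forall_linearEquiv_eq {B : Submodule R M} (hB : IsAtom B) :
    (∃! C, IsCompl B C) ↔ ∀ B' : Submodule R M, Nonempty (B' ≃ₗ[R] B) → B' = B := by
  have := isSimpleModule_iff_isAtom.mpr hB
  refine ⟨fun ⟨C, hC, huniq⟩ B' ⟨φ⟩ => by_contra fun hne => ?_, fun h => ?_⟩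
  · have hB' : IsAtom B' := isSimpleModule_iff_isAtom.mp (IsSimpleModule.congr φ)
    have hdisj : Disjoint B B' := hB.disjoint_of_ne hB' (Ne.symm hne)
    obtain ⟨G, hG, hBG⟩ := exists_disjoint_le_sup_of_linearEquiv hdisj φ
    have hBC : B ≤ C := hBG.trans (sup_le (le_of_disjoint_of_forall_isCompl_eq huniq hdisj)
      (le_of_disjoint_of_forall_isCompl_eq huniq hG))
    exact hB.1 (hC.disjoint.eq_bot_of_le hBC)
  · obtain ⟨C, hC⟩ := ComplementedLattice.exists_isCompl B
    refine ⟨C, hC, fun D hD => by_contra fun hDC => ?_⟩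
    have hDC' : ¬ D ≤ C := fun hle => hDC <| eq_of_le_of_inf_le_of_sup_le hle
      (hC.symm.inf_eq_bot.trans_le bot_le) (le_top.trans_eq hD.symm.sup_eq_top.symm)
    obtain ⟨A, hAB, hA⟩ := exists_ne_linearEquiv_of_not_le_isCompl hB hC hD.disjoint hDC'
    exact hAB (h A hA)

end Submodule

section SumEssentialGraph

variable [IsSemisimpleModule R M]

theorem isEssentialSubmodule_iff_eq_top (N : Submodule R M) : IsEssentialSubmodule N ↔ N = ⊤ := by
  refine ⟨fun h => by_contra fun hN => ?_, by rintro rfl B hB; simpa using hB⟩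
  obtain ⟨C, hC⟩ := exists_isCompl N
  refine h C (fun hC0 => hN ?_) hC.inf_eq_bot
  simpa [hC0] using hC.sup_eq_top

theorem adjS_iff_codisjoint_ne_top {B C : Submodule R M} (hB : IsVertexS B) :
    AdjS B C ↔ Codisjoint B C ∧ C ≠ ⊤ := by
  unfold AdjS IsVertexS
  rw [isEssentialSubmodule_iff_eq_top, codisjoint_iff]
  refine ⟨fun ⟨_, ⟨_, hC⟩, _, h⟩ => ⟨h, hC⟩, fun ⟨h, hC⟩ => ⟨hB, ⟨?_, hC⟩, ?_, h⟩⟩ <;>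
    rintro rfl <;> exact hB.2 (by simpa using h)

end SumEssentialGraph

/-- In a semisimple module `M`, a nontrivial submodule `B` has degree 1
in `S(M)` iff `B` is simple, `M` is not simple, and no other submodule of `M` is
isomorphic to `B`. -/
theorem stmt8 [IsSemisimpleModule R M] (B : Submodule R M) (hB : IsVertexS B) :
    (∃! C, AdjS B C) ↔
      (IsAtom B ∧ ¬ IsSimpleModule R M ∧
        ∀ B' : Submodule R M, Nonempty (↥B' ≃ₗ[R] ↥B) → B' = B) := by
  have hM : ¬ IsSimpleModule R M := fun _ => (eq_bot_or_eq_top B).elim hB.1 hB.2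
  rw [existsUnique_congr fun _ => adjS_iff_codisjoint_ne_top hB,
    existsUnique_codisjoint_ne_top_iff hB.1, and_iff_right hM]
  exact and_congr_right Submodule.existsUnique_isCompl_iff_forall_linearEquiv_eq
end
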